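/- Let α > 0, let K be a compact subset of a dyadic cube Q₀ in R^d, and let {Q_j} be a Whitney decomposition of K^c. For a dyadic cube Q ⊆ Q₀ define λ(Q) = Σ_{Q_j ⊆ Q} (ℓ(Q_j)/ℓ(Q))^{d+α}. Then λ(Q) ≤ |Q \ K| / |Q| ≤ 1 for all Q ⊆ Q₀, and Σ_{Q ⊆ Q₀, Q dyadic} λ(Q) |Q| ≤ |Q₀ \ K| / (1 − 2^{-α}). -/

import Mathlib

open MeasureTheory Metric Set ENNReal

/-- The axis-parallel cube with corner `a` and side length `l`. -/
def cube {d : ℕ} (a : Fin d → ℝ) (l : ℝ) : Set (Fin d → ℝ) :=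
  Set.Icc a (fun i => a i + l)

/-- The concentric dilate `MQ` of the cube with corner `a` and side `l`. -/
def cubeDilate {d : ℕ} (a : Fin d → ℝ) (l M : ℝ) : Set (Fin d → ℝ) :=
  cube (fun i => a i + l / 2 - M * l / 2) (M * l)

/-- The dyadic cube with index `p = (n, j)`. -/
def dc {d : ℕ} (p : ℤ × (Fin d → ℤ)) : Set (Fin d → ℝ) :=
  cube (fun i => (2 : ℝ) ^ p.1 * (p.2 i : ℝ)) ((2 : ℝ) ^ p.1)

/-- The concentric dilate `M·Q` of the dyadic cube with index `p`. -/
def dcDilate {d : ℕ} (p : ℤ × (Fin d → ℤ)) (M : ℝ) : Set (Fin d → ℝ) :=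
  cubeDilate (fun i => (2 : ℝ) ^ p.1 * (p.2 i : ℝ)) ((2 : ℝ) ^ p.1) M

/-- `p` indexes a Whitney cube for `K`: a maximal dyadic cube `Q ⊆ Kᶜ` with `3Q ∩ K = ∅`. -/
def IsWhitneyFor {d : ℕ} (K : Set (Fin d → ℝ)) (p : ℤ × (Fin d → ℤ)) : Prop :=
  (dc p ⊆ Kᶜ ∧ dcDilate p 3 ∩ K = ∅) ∧
  ∀ p' : ℤ × (Fin d → ℤ), dc p ⊂ dc p' → ¬(dc p' ⊆ Kᶜ ∧ dcDilate p' 3 ∩ K = ∅)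

/-- `λ(Q) = Σ_{Q_j ⊆ Q} (ℓ(Q_j)/ℓ(Q))^{d+α}`, summed over Whitney cubes `Q_j ⊆ Q` of `Kᶜ`. -/
noncomputable def lamK {d : ℕ} (K : Set (Fin d → ℝ)) (α : ℝ) (Q : ℤ × (Fin d → ℤ)) : ℝ≥0∞ :=
  ∑' p : {p : ℤ × (Fin d → ℤ) // IsWhitneyFor K p ∧ dc p ⊆ dc Q},
    ENNReal.ofReal (((2 : ℝ) ^ p.val.1 / (2 : ℝ) ^ Q.1) ^ ((d : ℝ) + α))

/-!
Whitney cubes have pairwise disjoint interiors and lie in `Kᶜ`, so their volumes inside a dyadic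
cube `Q` add up to at most `|Q \ K|`; since `(ℓ(P)/ℓ(Q))^{d+α} |Q| = |P| (ℓ(P)/ℓ(Q))^α ≤ |P|` for
`P ⊆ Q`, this bounds `λ(Q)|Q|`. For the double sum exchange the order of summation: the dyadic
ancestors of a Whitney cube `P` are determined by their side lengths `2^k ℓ(P)`, `k ≥ 0`, so `P`
contributes at most `|P| Σ_k 2^{-kα} = |P| / (1 - 2^{-α})`.
-/

lemma ENNReal.tsum_tsum_subtype_le_swap {α β : Type*} {P : α → Prop} {R : α → β → Prop}
    {S : β → Prop} {T : β → α → Prop} (h : ∀ a b, P a → R a b → S b ∧ T b a)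
    (f : α → β → ℝ≥0∞) :
    ∑' a : {a // P a}, ∑' b : {b // R a b}, f a b
      ≤ ∑' b : {b // S b}, ∑' a : {a // T b a}, f a b := by
  rw [← ENNReal.tsum_sigma' (fun x : Σ a : {a // P a}, {b // R a b} => f x.1 x.2),
    ← ENNReal.tsum_sigma' (fun y : Σ b : {b // S b}, {a // T b a} => f y.2 y.1)]
  let swap : (Σ a : {a // P a}, {b // R a b}) → Σ b : {b // S b}, {a // T b a} :=
    fun x => ⟨⟨x.2, (h _ _ x.1.2 x.2.2).1⟩, ⟨x.1, (h _ _ x.1.2 x.2.2).2⟩⟩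
  have hswap : Function.Injective swap := by
    rintro ⟨⟨a, _⟩, ⟨b, _⟩⟩ ⟨⟨a', _⟩, ⟨b', _⟩⟩ hx
    simp only [swap, Sigma.mk.injEq, Subtype.mk.injEq] at hx
    obtain ⟨rfl, ha⟩ := hx
    obtain rfl : a = a' := by simpa using ha
    rfl
  exact ENNReal.tsum_comp_le_tsum_of_injective hswap (fun y => f y.2 y.1)

lemma scaled_int_intervals_nested {s x : ℝ} (hs : 0 < s) {a c N : ℤ}
    (ha : s * a < x) (ha' : x < s * (a + 1)) (hc : s * c < x) (hc' : x < s * (c + N)) :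
    c ≤ a ∧ a + 1 ≤ c + N := by
  have h1 : (c : ℝ) < a + 1 := lt_of_mul_lt_mul_left (hc.trans ha') hs.le
  have h2 : (a : ℝ) < c + N := lt_of_mul_lt_mul_left (ha.trans hc') hs.le
  norm_cast at h1 h2
  omega

lemma two_zpow_div_rpow_mul (m : ℤ) (k d : ℕ) (α : ℝ) :
    ((2 : ℝ) ^ m / 2 ^ (m + k)) ^ ((d : ℝ) + α) * ((2 : ℝ) ^ (m + k)) ^ d
      = ((2 : ℝ) ^ m) ^ d * ((2 : ℝ) ^ (-α)) ^ k := by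
  simp only [← Real.rpow_intCast, ← Real.rpow_natCast, ← Real.rpow_sub two_pos,
    ← Real.rpow_mul two_pos.le, ← Real.rpow_add two_pos]
  congr 1
  push_cast
  ring

section DyadicCubes

variable {d : ℕ}

lemma mem_dc {p : ℤ × (Fin d → ℤ)} {x : Fin d → ℝ} :
    x ∈ dc p ↔ ∀ i, (2 : ℝ) ^ p.1 * p.2 i ≤ x i ∧ x i ≤ (2 : ℝ) ^ p.1 * p.2 i + 2 ^ p.1 := by
  simp [dc, cube, Pi.le_def, forall_and]

lemma dc_subset_dc_iff {p q : ℤ × (Fin d → ℤ)} :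
    dc p ⊆ dc q ↔ ∀ i, (2 : ℝ) ^ q.1 * q.2 i ≤ (2 : ℝ) ^ p.1 * p.2 i ∧
      (2 : ℝ) ^ p.1 * p.2 i + 2 ^ p.1 ≤ (2 : ℝ) ^ q.1 * q.2 i + 2 ^ q.1 := by
  constructor
  · intro h i
    have hp : (0 : ℝ) ≤ 2 ^ p.1 := by positivity
    have lo : (fun j => (2 : ℝ) ^ p.1 * p.2 j) ∈ dc p := mem_dc.2 fun j => ⟨le_rfl, by linarith⟩
    have hi : (fun j => (2 : ℝ) ^ p.1 * p.2 j + 2 ^ p.1) ∈ dc p :=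
      mem_dc.2 fun j => ⟨by linarith, le_rfl⟩
    exact ⟨(mem_dc.1 (h lo) i).1, (mem_dc.1 (h hi) i).2⟩
  · intro h x hx
    exact mem_dc.2 fun i => ⟨(h i).1.trans (mem_dc.1 hx i).1, (mem_dc.1 hx i).2.trans (h i).2⟩

def dcInterior (p : ℤ × (Fin d → ℤ)) : Set (Fin d → ℝ) :=
  univ.pi fun i => Ioo ((2 : ℝ) ^ p.1 * p.2 i) ((2 : ℝ) ^ p.1 * p.2 i + 2 ^ p.1)

lemma mem_dcInterior {p : ℤ × (Fin d → ℤ)} {x : Fin d → ℝ} :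
    x ∈ dcInterior p ↔ ∀ i, (2 : ℝ) ^ p.1 * p.2 i < x i ∧ x i < (2 : ℝ) ^ p.1 * p.2 i + 2 ^ p.1 := by
  simp [dcInterior]

lemma dcInterior_subset_dc (p : ℤ × (Fin d → ℤ)) : dcInterior p ⊆ dc p :=
  fun _ hx => mem_dc.2 fun i => ⟨(mem_dcInterior.1 hx i).1.le, (mem_dcInterior.1 hx i).2.le⟩

lemma dcInterior_mono {p q : ℤ × (Fin d → ℤ)} (h : dc p ⊆ dc q) : dcInterior p ⊆ dcInterior q :=
  fun _ hx => mem_dcInterior.2 fun i =>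
    ⟨(dc_subset_dc_iff.1 h i).1.trans_lt (mem_dcInterior.1 hx i).1,
      (mem_dcInterior.1 hx i).2.trans_le (dc_subset_dc_iff.1 h i).2⟩

lemma center_mem_dcInterior (p : ℤ × (Fin d → ℤ)) :
    (fun i => 2 ^ p.1 * p.2 i + 2 ^ p.1 / 2 : Fin d → ℝ) ∈ dcInterior p := by
  have hp : (0 : ℝ) < 2 ^ p.1 := by positivity
  exact mem_dcInterior.2 fun i => ⟨by linarith, by linarith⟩

lemma measurableSet_dcInterior (p : ℤ × (Fin d → ℤ)) : MeasurableSet (dcInterior p) :=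
  MeasurableSet.univ_pi fun _ => measurableSet_Ioo

lemma volume_dc (p : ℤ × (Fin d → ℤ)) : volume (dc p) = ENNReal.ofReal (2 ^ p.1) ^ d := by
  simp [dc, cube, Real.volume_Icc_pi]

lemma volume_dcInterior (p : ℤ × (Fin d → ℤ)) :
    volume (dcInterior p) = ENNReal.ofReal (2 ^ p.1) ^ d := by
  simp [dcInterior, Real.volume_pi_Ioo]

lemma dc_subset_dc_of_mem_dcInterior {p q : ℤ × (Fin d → ℤ)} (hpq : p.1 ≤ q.1) {x : Fin d → ℝ}
    (hp : x ∈ dcInterior p) (hq : x ∈ dcInterior q) : dc p ⊆ dc q := by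
  obtain ⟨k, hk⟩ := Int.le.dest hpq
  have hscale : (2 : ℝ) ^ q.1 = 2 ^ p.1 * 2 ^ k := by
    rw [← hk, zpow_add₀ two_ne_zero, zpow_natCast]
  refine dc_subset_dc_iff.2 fun i => ?_
  obtain ⟨hp₁, hp₂⟩ := mem_dcInterior.1 hp i
  obtain ⟨hq₁, hq₂⟩ := mem_dcInterior.1 hq i
  rw [hscale] at hq₁ hq₂ ⊢
  obtain ⟨h₁, h₂⟩ := scaled_int_intervals_nested (s := 2 ^ p.1) (c := 2 ^ k * q.2 i)
    (N := 2 ^ k) (x := x i) (by positivity) hp₁ (by linarith) (by push_cast; linarith)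
    (by push_cast; linarith)
  have h₁' : (2 : ℝ) ^ k * q.2 i ≤ p.2 i := by exact_mod_cast h₁
  have h₂' : (p.2 i : ℝ) + 1 ≤ 2 ^ k * q.2 i + 2 ^ k := by exact_mod_cast h₂
  have hp0 : (0 : ℝ) < 2 ^ p.1 := by positivity
  constructor <;> nlinarith

lemma eq_of_mem_dcInterior {p q : ℤ × (Fin d → ℤ)} (hpq : p.1 = q.1) {x : Fin d → ℝ}
    (hp : x ∈ dcInterior p) (hq : x ∈ dcInterior q) : p = q := by
  refine Prod.ext hpq (funext fun i => ?_)
  obtain ⟨hp₁, hp₂⟩ := mem_dcInterior.1 hp i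
  obtain ⟨hq₁, hq₂⟩ := mem_dcInterior.1 hq i
  rw [← hpq] at hq₁ hq₂
  obtain ⟨h₁, h₂⟩ := scaled_int_intervals_nested (c := q.2 i) (N := 1) (x := x i)
    (by positivity) hp₁ (by linarith) hq₁ (by push_cast; linarith)
  omega

lemma eq_of_dc_subset_of_fst_eq {p q q' : ℤ × (Fin d → ℤ)} (hq : dc p ⊆ dc q)
    (hq' : dc p ⊆ dc q') (h : q.1 = q'.1) : q = q' :=
  eq_of_mem_dcInterior h (dcInterior_mono hq (center_mem_dcInterior p))
    (dcInterior_mono hq' (center_mem_dcInterior p))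

lemma fst_le_of_dc_subset (hd : 0 < d) {p q : ℤ × (Fin d → ℤ)} (h : dc p ⊆ dc q) :
    p.1 ≤ q.1 := by
  obtain ⟨h₁, h₂⟩ := dc_subset_dc_iff.1 h ⟨0, hd⟩
  exact (zpow_le_zpow_iff_right₀ (by norm_num : (1 : ℝ) < 2)).1 (by linarith)

lemma dc_injective (hd : 0 < d) : Function.Injective (dc : ℤ × (Fin d → ℤ) → Set (Fin d → ℝ)) :=
  fun _ _ h => eq_of_dc_subset_of_fst_eq le_rfl h.le
    (le_antisymm (fst_le_of_dc_subset hd h.le) (fst_le_of_dc_subset hd h.ge))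

end DyadicCubes

section Whitney

variable {d : ℕ} {K : Set (Fin d → ℝ)}

lemma IsWhitneyFor.disjoint_dcInterior (hd : 0 < d) {p q : ℤ × (Fin d → ℤ)}
    (hp : IsWhitneyFor K p) (hq : IsWhitneyFor K q) (hne : p ≠ q) :
    Disjoint (dcInterior p) (dcInterior q) := by
  wlog hpq : p.1 ≤ q.1 generalizing p q
  · exact (this hq hp hne.symm (le_of_not_ge hpq)).symm
  refine Set.disjoint_left.2 fun x hxp hxq => hp.2 q ?_ hq.1
  exact (dc_subset_dc_of_mem_dcInterior hpq hxp hxq).ssubset_of_ne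
    fun h => hne (dc_injective hd h)

lemma tsum_volume_whitney_le (hd : 0 < d) (K : Set (Fin d → ℝ)) (Q : ℤ × (Fin d → ℤ)) :
    ∑' p : {p : ℤ × (Fin d → ℤ) // IsWhitneyFor K p ∧ dc p ⊆ dc Q}, volume (dc p.1)
      ≤ volume (dc Q \ K) := by
  calc ∑' p : {p : ℤ × (Fin d → ℤ) // IsWhitneyFor K p ∧ dc p ⊆ dc Q}, volume (dc p.1)
      = ∑' p : {p : ℤ × (Fin d → ℤ) // IsWhitneyFor K p ∧ dc p ⊆ dc Q},
          volume (dcInterior p.1) := by simp only [volume_dc, volume_dcInterior]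
    _ = volume (⋃ p : {p : ℤ × (Fin d → ℤ) // IsWhitneyFor K p ∧ dc p ⊆ dc Q},
          dcInterior p.1) := by
        refine (measure_iUnion (fun p q hne => ?_) fun _ => measurableSet_dcInterior _).symm
        exact p.2.1.disjoint_dcInterior hd q.2.1 (Subtype.coe_ne_coe.2 hne)
    _ ≤ volume (dc Q \ K) := by
        refine measure_mono (iUnion_subset fun p x hx => ?_)
        have hx' := dcInterior_subset_dc _ hx
        exact ⟨p.2.2 hx', p.2.1.1.1 hx'⟩

end Whitney

section Weights

variable {d : ℕ}

noncomputable def dyadicWeight (α : ℝ) (p Q : ℤ × (Fin d → ℤ)) : ℝ≥0∞ :=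
  ENNReal.ofReal (((2 : ℝ) ^ p.1 / (2 : ℝ) ^ Q.1) ^ ((d : ℝ) + α)) * volume (dc Q)

lemma lamK_mul_volume (K : Set (Fin d → ℝ)) (α : ℝ) (Q : ℤ × (Fin d → ℤ)) :
    lamK K α Q * volume (dc Q)
      = ∑' p : {p : ℤ × (Fin d → ℤ) // IsWhitneyFor K p ∧ dc p ⊆ dc Q}, dyadicWeight α p.1 Q := by
  rw [lamK, ← ENNReal.tsum_mul_right]
  rfl

lemma dyadicWeight_eq (α : ℝ) {p Q : ℤ × (Fin d → ℤ)} (h : p.1 ≤ Q.1) :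
    dyadicWeight α p Q = volume (dc p) * ENNReal.ofReal (2 ^ (-α)) ^ (Q.1 - p.1).toNat := by
  obtain ⟨k, hk⟩ := Int.le.dest h
  have hk' : (Q.1 - p.1).toNat = k := by omega
  rw [dyadicWeight, volume_dc, volume_dc, hk', ← hk, ← ENNReal.ofReal_pow (by positivity),
    ← ENNReal.ofReal_pow (by positivity), ← ENNReal.ofReal_pow (by positivity),
    ← ENNReal.ofReal_mul (by positivity), ← ENNReal.ofReal_mul (by positivity),
    two_zpow_div_rpow_mul]

lemma lamK_le_div (hd : 0 < d) (K : Set (Fin d → ℝ)) {α : ℝ} (hα : 0 ≤ α)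
    (Q : ℤ × (Fin d → ℤ)) : lamK K α Q ≤ volume (dc Q \ K) / volume (dc Q) := by
  have hℓ : (0 : ℝ) < 2 ^ Q.1 := by positivity
  have h0 : volume (dc Q) ≠ 0 := by simp [volume_dc, hd.ne', hℓ]
  have htop : volume (dc Q) ≠ ∞ := by simp [volume_dc]
  have hc : ENNReal.ofReal (2 ^ (-α)) ≤ 1 :=
    ENNReal.ofReal_le_one.2 (Real.rpow_le_one_of_one_le_of_nonpos one_le_two (neg_nonpos.2 hα))
  rw [ENNReal.le_div_iff_mul_le (.inl h0) (.inl htop), lamK_mul_volume]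
  refine (ENNReal.tsum_le_tsum fun p => ?_).trans (tsum_volume_whitney_le hd K Q)
  rw [dyadicWeight_eq α (fst_le_of_dc_subset hd p.2.2)]
  exact mul_le_of_le_one_right' (pow_le_one₀ zero_le hc)

lemma tsum_dyadicWeight_ancestors_le (hd : 0 < d) (α : ℝ) (p : ℤ × (Fin d → ℤ)) :
    ∑' Q : {Q : ℤ × (Fin d → ℤ) // dc p ⊆ dc Q}, dyadicWeight α p Q.1
      ≤ (1 - ENNReal.ofReal (2 ^ (-α)))⁻¹ * volume (dc p) := by
  have hinj : Function.Injective fun Q : {Q : ℤ × (Fin d → ℤ) // dc p ⊆ dc Q} =>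
      (Q.1.1 - p.1).toNat := by
    intro Q Q' h
    have := fst_le_of_dc_subset hd Q.2
    have := fst_le_of_dc_subset hd Q'.2
    exact Subtype.ext (eq_of_dc_subset_of_fst_eq Q.2 Q'.2 (by simp only at h; omega))
  calc ∑' Q : {Q : ℤ × (Fin d → ℤ) // dc p ⊆ dc Q}, dyadicWeight α p Q.1
      = ∑' Q : {Q : ℤ × (Fin d → ℤ) // dc p ⊆ dc Q},
          (fun k : ℕ => volume (dc p) * ENNReal.ofReal (2 ^ (-α)) ^ k) (Q.1.1 - p.1).toNat :=
        tsum_congr fun Q => dyadicWeight_eq α (fst_le_of_dc_subset hd Q.2)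
    _ ≤ ∑' k : ℕ, volume (dc p) * ENNReal.ofReal (2 ^ (-α)) ^ k :=
        ENNReal.tsum_comp_le_tsum_of_injective hinj _
    _ = (1 - ENNReal.ofReal (2 ^ (-α)))⁻¹ * volume (dc p) := by
        rw [ENNReal.tsum_mul_left, ENNReal.tsum_geometric, mul_comm]

lemma tsum_lamK_mul_volume_le (hd : 0 < d) (K : Set (Fin d → ℝ)) (α : ℝ)
    (p₀ : ℤ × (Fin d → ℤ)) :
    ∑' Q : {Q : ℤ × (Fin d → ℤ) // dc Q ⊆ dc p₀}, lamK K α Q.1 * volume (dc Q.1)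
      ≤ (1 - ENNReal.ofReal (2 ^ (-α)))⁻¹ * volume (dc p₀ \ K) :=
  calc ∑' Q : {Q : ℤ × (Fin d → ℤ) // dc Q ⊆ dc p₀}, lamK K α Q.1 * volume (dc Q.1)
      = ∑' Q : {Q : ℤ × (Fin d → ℤ) // dc Q ⊆ dc p₀},
          ∑' p : {p : ℤ × (Fin d → ℤ) // IsWhitneyFor K p ∧ dc p ⊆ dc Q.1},
            dyadicWeight α p.1 Q.1 := tsum_congr fun Q => lamK_mul_volume K α Q.1
    _ ≤ ∑' p : {p : ℤ × (Fin d → ℤ) // IsWhitneyFor K p ∧ dc p ⊆ dc p₀},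
          ∑' Q : {Q : ℤ × (Fin d → ℤ) // dc p.1 ⊆ dc Q}, dyadicWeight α p.1 Q.1 :=
        ENNReal.tsum_tsum_subtype_le_swap (R := fun Q p => IsWhitneyFor K p ∧ dc p ⊆ dc Q)
          (T := fun p Q => dc p ⊆ dc Q)
          (fun _ _ hQ hp => ⟨⟨hp.1, hp.2.trans hQ⟩, hp.2⟩) (fun Q p => dyadicWeight α p Q)
    _ ≤ ∑' p : {p : ℤ × (Fin d → ℤ) // IsWhitneyFor K p ∧ dc p ⊆ dc p₀},
          (1 - ENNReal.ofReal (2 ^ (-α)))⁻¹ * volume (dc p.1) :=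
        ENNReal.tsum_le_tsum fun p => tsum_dyadicWeight_ancestors_le hd α p.1
    _ ≤ (1 - ENNReal.ofReal (2 ^ (-α)))⁻¹ * volume (dc p₀ \ K) := by
        rw [ENNReal.tsum_mul_left]
        exact mul_le_mul_right (tsum_volume_whitney_le hd K p₀) _

end Weights

theorem whitney_geometric_sum (d : ℕ) (hd : 0 < d) (α : ℝ) (hα : 0 < α)
    (p₀ : ℤ × (Fin d → ℤ)) (K : Set (Fin d → ℝ)) :
    (∀ Q : ℤ × (Fin d → ℤ), dc Q ⊆ dc p₀ →
      lamK K α Q ≤ volume (dc Q \ K) / volume (dc Q) ∧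
        volume (dc Q \ K) / volume (dc Q) ≤ 1) ∧
    (∑' Q : {Q : ℤ × (Fin d → ℤ) // dc Q ⊆ dc p₀}, lamK K α Q.val * volume (dc Q.val))
      ≤ ENNReal.ofReal (1 / (1 - (2 : ℝ) ^ (-α))) * volume (dc p₀ \ K) := by
  refine ⟨fun Q _ => ⟨lamK_le_div hd K hα.le Q, ?_⟩, ?_⟩
  · exact ENNReal.div_le_of_le_mul (by rw [one_mul]; exact measure_mono sdiff_subset)
  · have hlt : (2 : ℝ) ^ (-α) < 1 := Real.rpow_lt_one_of_one_lt_of_neg one_lt_two (by linarith)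
    rw [one_div, ENNReal.ofReal_inv_of_pos (by linarith), ENNReal.ofReal_sub _ (by positivity),
      ENNReal.ofReal_one]
    exact tsum_lamK_mul_volume_le hd K α p₀
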